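/- (Homological perturbation.) Let M and M′ be ℤ-graded modules over a ring, and let d : M ⊕ M′ → M ⊕ M′ be a degree −1 map with d² = 0, written in matrix form d = [[α, β],[γ, δ]] with α : M→M, β : M′→M, γ : M→M′, δ : M′→M′. Assume γ∘β = 0 (equivalently δ² = 0), and assume there is a degree +1 map H : M′ → M′ with H∘δ + δ∘H = id. Then: (1) d′ := α − β∘H∘γ satisfies (d′)² = 0; (2) the map i : M → M⊕M′, i(x) = (x, −Hγ(x)), satisfies d∘i = i∘d′; (3) the map p : M⊕M′ → M, p(x,x′) = x − βH(x′), satisfies p∘d = d′∘p. -/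

import Mathlib

/-!
With `d′ = α - βHγ`, the three identities follow by expanding and using the entries of `d² = 0`
(`α² = -βγ`, `αβ = -βδ`, `γα = -δγ`) together with `γβ = 0`: in each case what remains is
`Hδ + δH - 1` sandwiched between two of the maps, which vanishes by the homotopy equation.
-/

section HomologicalPerturbation

variable {R M M' : Type*} [Semiring R] [AddCommGroup M] [AddCommGroup M']
  [Module R M] [Module R M']
  {α : M →ₗ[R] M} {β : M' →ₗ[R] M} {γ : M →ₗ[R] M'} {δ : M' →ₗ[R] M'} {H : M' →ₗ[R] M'}

theorem perturbed_differential_sq_eq_zero (hαα : ∀ x, α (α x) = -β (γ x))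
    (hαβ : ∀ x', α (β x') = -β (δ x')) (hγα : ∀ x, γ (α x) = -δ (γ x))
    (hγβ : ∀ x', γ (β x') = 0) (hH : ∀ x', H (δ x') + δ (H x') = x') (x : M) :
    α (α x - β (H (γ x))) - β (H (γ (α x - β (H (γ x))))) = 0 := by
  have hHδ (y : M') : H (δ y) = y - δ (H y) := eq_sub_of_add_eq (hH y)
  simp only [map_sub, map_neg, hαα, hαβ, hγα, hγβ, hHδ, sub_zero]
  abel

theorem perturbed_inclusion_comm (hγα : ∀ x, γ (α x) = -δ (γ x))
    (hγβ : ∀ x', γ (β x') = 0) (hH : ∀ x', H (δ x') + δ (H x') = x') (x : M) :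
    γ x + δ (-(H (γ x))) = -(H (γ (α x - β (H (γ x))))) := by
  have hHδ (y : M') : H (δ y) = y - δ (H y) := eq_sub_of_add_eq (hH y)
  simp only [map_sub, map_neg, hγα, hγβ, hHδ, sub_zero, neg_neg]
  abel

theorem perturbed_projection_comm (hαβ : ∀ x', α (β x') = -β (δ x'))
    (hγβ : ∀ x', γ (β x') = 0) (hH : ∀ x', H (δ x') + δ (H x') = x') (x : M) (x' : M') :
    (α x + β x') - β (H (γ x + δ x')) = α (x - β (H x')) - β (H (γ (x - β (H x')))) := by
  have hHδ (y : M') : H (δ y) = y - δ (H y) := eq_sub_of_add_eq (hH y)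
  simp only [map_add, map_sub, hαβ, hγβ, hHδ, sub_zero]
  abel

end HomologicalPerturbation

/-- **Homological perturbation.** Let `d = [[α, β],[γ, δ]]` be a degree `−1` map
on `M ⊕ M′` with `d² = 0` (written componentwise), with `γ∘β = 0` and a homotopy
`H : M′ → M′` with `H∘δ + δ∘H = id`.  Then `d′ = α − β∘H∘γ` squares to zero, and the
maps `i(x) = (x, −Hγx)` and `p(x,x′) = x − βH(x′)` are chain maps: `d∘i = i∘d′` and
`p∘d = d′∘p`. -/
theorem homological_perturbation
    {R M M' : Type*} [Ring R] [AddCommGroup M] [AddCommGroup M']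
    [Module R M] [Module R M']
    (α : M →ₗ[R] M) (β : M' →ₗ[R] M) (γ : M →ₗ[R] M') (δ : M' →ₗ[R] M')
    (hd : ∀ (x : M) (x' : M'),
      α (α x + β x') + β (γ x + δ x') = 0 ∧ γ (α x + β x') + δ (γ x + δ x') = 0)
    (hγβ : ∀ x', γ (β x') = 0)
    (H : M' →ₗ[R] M') (hH : ∀ x', H (δ x') + δ (H x') = x') :
    -- (1) `d′ = α − βHγ` squares to zero
    (∀ x : M, α (α x - β (H (γ x))) - β (H (γ (α x - β (H (γ x))))) = 0) ∧
    -- (2) `d ∘ i = i ∘ d′` for `i(x) = (x, −Hγx)`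
    (∀ x : M,
      α x + β (-(H (γ x))) = α x - β (H (γ x)) ∧
      γ x + δ (-(H (γ x))) = -(H (γ (α x - β (H (γ x)))))) ∧
    -- (3) `p ∘ d = d′ ∘ p` for `p(x,x′) = x − βH(x′)`
    (∀ (x : M) (x' : M'),
      (α x + β x') - β (H (γ x + δ x')) =
        α (x - β (H x')) - β (H (γ (x - β (H x'))))) := by
  have hαα : ∀ x, α (α x) = -β (γ x) := fun x =>
    eq_neg_of_add_eq_zero_left (by simpa using (hd x 0).1)
  have hγα : ∀ x, γ (α x) = -δ (γ x) := fun x =>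
    eq_neg_of_add_eq_zero_left (by simpa using (hd x 0).2)
  have hαβ : ∀ x', α (β x') = -β (δ x') := fun x' =>
    eq_neg_of_add_eq_zero_left (by simpa using (hd 0 x').1)
  refine ⟨perturbed_differential_sq_eq_zero hαα hαβ hγα hγβ hH,
    fun x => ⟨by rw [map_neg, sub_eq_add_neg], perturbed_inclusion_comm hγα hγβ hH x⟩,
    perturbed_projection_comm hαβ hγβ hH⟩
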